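/- arXiv:2208.14292 — 4 statements merged into one kernel-verified Lean document; each statement's English description precedes it below -/
import Mathlib

section
/- (Exactness of the ETD3RK/ETD4RK final-step quadrature for quadratic forcing.) Let L be an N×N real matrix, τ > 0, and c₀, c₁, c₂ ∈ ℝ^N; set f(t) = c₀ + c₁ t + c₂ t². Then [2M₃(τ)/τ² − 3M₂(τ)/τ + M₁(τ)]·f(0) − [4M₃(τ)/τ² − 4M₂(τ)/τ]·f(τ/2) + [2M₃(τ)/τ² − M₂(τ)/τ]·f(τ) = M₁(τ)·c₀ + M₂(τ)·c₁ + M₃(τ)·c₂. Consequently the final step of the ETD3RK and ETD4RK schemes reproduces the exact increment ∫₀^τ exp((τ−t)L) f(t) dt whenever the forcing is a quadratic polynomial in t. -/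
/-! The quadrature identity is pure linear algebra: the three weights collect the coefficients
of `c₀`, `c₁`, `c₂` into `M₁`, `M₂`, `M₃`, whatever these matrices are. The exactness
is linearity of the integral, once `mulVec` is pulled under the integral sign. -/

attribute [local instance] Matrix.normedAddCommGroup Matrix.normedSpace

/-- `Mmat L n τ = ∫₀^τ exp((τ−t)L) t^(n−1) dt`. -/
noncomputable def Mmat {N : ℕ} (L : Matrix (Fin N) (Fin N) ℝ) (n : ℕ) (τ : ℝ) :
    Matrix (Fin N) (Fin N) ℝ :=
  ∫ t in (0:ℝ)..τ, t ^ (n - 1) • NormedSpace.exp ((τ - t) • L)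

open NormedSpace

namespace Matrix

variable {m : Type*} [Fintype m]

theorem quadratureWeights_mulVec_quadratic {K : Type*} [Field K] [CharZero K]
    (M₁ M₂ M₃ : Matrix m m K) {τ : K} (hτ : τ ≠ 0) (c₀ c₁ c₂ : m → K) (f : K → m → K)
    (hf : ∀ t, f t = c₀ + t • c₁ + t ^ 2 • c₂) :
    ((2 / τ ^ 2) • M₃ - (3 / τ) • M₂ + M₁) *ᵥ f 0
      - ((4 / τ ^ 2) • M₃ - (4 / τ) • M₂) *ᵥ f (τ / 2)
      + ((2 / τ ^ 2) • M₃ - (1 / τ) • M₂) *ᵥ f τ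
    = M₁ *ᵥ c₀ + M₂ *ᵥ c₁ + M₃ *ᵥ c₂ := by
  simp only [hf, sub_mulVec, add_mulVec, smul_mulVec, mulVec_add, mulVec_smul]
  match_scalars <;> field_simp <;> ring

@[fun_prop]
theorem continuous_exp_real [DecidableEq m] :
    Continuous (exp : Matrix m m ℝ → Matrix m m ℝ) :=
  open scoped Norms.Operator in exp_continuous

section

-- The topology of `Matrix` agrees with that of `Matrix.normedAddCommGroup` only after
-- unfolding, which instance search does not do.
local instance : ENormedAddCommMonoid (Matrix m m ℝ) := NormedAddCommGroup.toENormedAddCommMonoid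

theorem intervalIntegral_mulVec {F : ℝ → Matrix m m ℝ} {a b : ℝ}
    (hF : IntervalIntegrable F MeasureTheory.volume a b) (c : m → ℝ) :
    (∫ t in a..b, F t) *ᵥ c = ∫ t in a..b, F t *ᵥ c :=
  (((mulVecBilin ℝ ℝ).flip c).toContinuousLinearMap.intervalIntegral_comp_comm hF).symm

end

end Matrix

open Matrix

theorem Mmat_mulVec {N : ℕ} (L : Matrix (Fin N) (Fin N) ℝ) (n : ℕ) (τ : ℝ) (c : Fin N → ℝ) :
    Mmat L n τ *ᵥ c = ∫ t in (0:ℝ)..τ, t ^ (n - 1) • (exp ((τ - t) • L) *ᵥ c) := by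
  have hcont : Continuous fun t : ℝ => t ^ (n - 1) • exp ((τ - t) • L) := by fun_prop
  rw [Mmat, intervalIntegral_mulVec (hcont.intervalIntegrable _ _)]
  simp_rw [smul_mulVec]

/-- exactness of the ETD3RK/ETD4RK final-step quadrature for quadratic
forcing: with `f t = c₀ + t c₁ + t² c₂`,
`[2M₃/τ² − 3M₂/τ + M₁]·f(0) − [4M₃/τ² − 4M₂/τ]·f(τ/2) + [2M₃/τ² − M₂/τ]·f(τ)
  = M₁·c₀ + M₂·c₁ + M₃·c₂`,
which is the exact increment `∫₀^τ exp((τ−t)L)·f(t) dt`. -/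
theorem etd3rk4rk_final_quadrature_exact_for_quadratic_forcing
    (N : ℕ) (L : Matrix (Fin N) (Fin N) ℝ) (τ : ℝ) (hτ : 0 < τ)
    (c₀ c₁ c₂ : Fin N → ℝ) (f : ℝ → Fin N → ℝ)
    (hf : f = fun t => c₀ + t • c₁ + t ^ 2 • c₂) :
    ((2 / τ ^ 2) • Mmat L 3 τ - (3 / τ) • Mmat L 2 τ + Mmat L 1 τ).mulVec (f 0)
      - ((4 / τ ^ 2) • Mmat L 3 τ - (4 / τ) • Mmat L 2 τ).mulVec (f (τ / 2))
      + ((2 / τ ^ 2) • Mmat L 3 τ - (1 / τ) • Mmat L 2 τ).mulVec (f τ)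
    = (Mmat L 1 τ).mulVec c₀ + (Mmat L 2 τ).mulVec c₁ + (Mmat L 3 τ).mulVec c₂
    ∧ (Mmat L 1 τ).mulVec c₀ + (Mmat L 2 τ).mulVec c₁ + (Mmat L 3 τ).mulVec c₂
      = ∫ t in (0:ℝ)..τ, (NormedSpace.exp ((τ - t) • L)).mulVec (f t) := by
  refine ⟨quadratureWeights_mulVec_quadratic _ _ _ hτ.ne' c₀ c₁ c₂ f (by simp [hf]), ?_⟩
  have hint (k : ℕ) (c : Fin N → ℝ) :
      IntervalIntegrable (fun t : ℝ => t ^ k • (exp ((τ - t) • L) *ᵥ c)) MeasureTheory.volume 0 τ :=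
    Continuous.intervalIntegrable (by fun_prop) _ _
  rw [Mmat_mulVec, Mmat_mulVec, Mmat_mulVec, ← intervalIntegral.integral_add (hint _ _) (hint _ _),
    ← intervalIntegral.integral_add ((hint _ _).add (hint _ _)) (hint _ _)]
  congr with t : 1
  simp [hf, mulVec_add, mulVec_smul]
end

section
/- Let L be an invertible N×N real matrix and τ > 0. Then 2M₃(τ)/τ² − 3M₂(τ)/τ + M₁(τ) = τ⁻² L⁻³ · (−4I − τL + exp(τL)·(4I − 3τL + τ²L²)). This identifies the coefficient of f(u(t),t) in the final step of the ETD3RK and ETD4RK schemes of Cox and Matthews with its form in terms of the matrices M₁, M₂, M₃. -/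
/-!
Integrating `t ^ n • exp ((τ - t) • L)` by parts gives `L M_{n+1} = n M_n - τ ^ n I`
(plus `exp (τ L)` when `n = 0`), hence `L ^ (n+1) M_{n+1} = n! (exp (τ L) - ∑_{k ≤ n} (τ L) ^ k / k!)`.
Multiplied by `L ^ 3`, the claimed identity becomes a polynomial identity in `L` and `exp (τ L)`,
which commute.
-/

attribute [local instance] Matrix.normedAddCommGroup Matrix.normedSpace

open NormedSpace

namespace Matrix

variable {m 𝕂 : Type*} [Fintype m] [DecidableEq m] [RCLike 𝕂]

/-- Derivatives only see the topology, which the operator norm also induces, and for that norm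
matrices form a Banach algebra. -/
theorem hasDerivAt_exp_smul_const' (L : Matrix m m 𝕂) (t : 𝕂) :
    HasDerivAt (fun u : 𝕂 => exp (u • L)) (L * exp (t • L)) t :=
  open scoped Matrix.Norms.Operator in _root_.hasDerivAt_exp_smul_const' L t

theorem hasDerivAt_exp_sub_smul (L : Matrix m m 𝕂) (τ t : 𝕂) :
    HasDerivAt (fun s : 𝕂 => exp ((τ - s) • L)) (-(L * exp ((τ - t) • L))) t := by
  have := (hasDerivAt_exp_smul_const' L (τ - t)).scomp t ((hasDerivAt_id t).const_sub τ)
  rwa [neg_one_smul] at this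

theorem continuous_exp_sub_smul (L : Matrix m m 𝕂) (τ : 𝕂) :
    Continuous fun s : 𝕂 => exp ((τ - s) • L) :=
  continuous_iff_continuousAt.2 fun t => (hasDerivAt_exp_sub_smul L τ t).continuousAt

end Matrix

section Mmat

variable {N : ℕ}

/-- `0 ^ n • exp (τ • L)` is the boundary term at `t = 0`; it survives only for `n = 0`, where the
junk value `Mmat L 0 τ = Mmat L 1 τ` is killed by the factor `n`. -/
theorem mul_Mmat_succ (L : Matrix (Fin N) (Fin N) ℝ) (n : ℕ) (τ : ℝ) :
    L * Mmat L (n + 1) τ = (n : ℝ) • Mmat L n τ + (0 : ℝ) ^ n • exp (τ • L) - τ ^ n • 1 := by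
  have hderiv : ∀ t ∈ Set.uIcc 0 τ, HasDerivAt (fun s : ℝ => s ^ n • exp ((τ - s) • L))
      ((n : ℝ) • t ^ (n - 1) • exp ((τ - t) • L) - L * (t ^ n • exp ((τ - t) • L))) t := by
    intro t _
    refine ((hasDerivAt_pow n t).smul (Matrix.hasDerivAt_exp_sub_smul L τ t)).congr_deriv ?_
    rw [mul_smul, mul_smul_comm, smul_neg]
    exact neg_add_eq_sub _ _
  let mulL := (LinearMap.mulLeft ℝ L).toContinuousLinearMap
  have hcont := fun k : ℕ => (continuous_pow k).smul (Matrix.continuous_exp_sub_smul L τ)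
  have hint := fun k : ℕ => (hcont k).intervalIntegrable (μ := MeasureTheory.volume) 0 τ
  have hintL := (mulL.continuous.comp (hcont n)).intervalIntegrable (μ := MeasureTheory.volume) 0 τ
  have hftc := intervalIntegral.integral_eq_sub_of_hasDerivAt hderiv
    (((hint (n - 1)).smul (n : ℝ)).sub hintL)
  have hpull : ∫ t in (0:ℝ)..τ, L * (t ^ n • exp ((τ - t) • L)) = L * Mmat L (n + 1) τ :=
    mulL.intervalIntegral_comp_comm (hint n)
  -- `by exact` defers the integrability proofs until `rw` has fixed the integrands.
  rw [intervalIntegral.integral_sub (by exact (hint (n - 1)).smul (n : ℝ)) (by exact hintL),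
    intervalIntegral.integral_smul, hpull] at hftc
  simp only [sub_self, zero_smul, exp_zero, sub_zero] at hftc
  change (n : ℝ) • Mmat L n τ - L * Mmat L (n + 1) τ = _ at hftc
  linear_combination (norm := module) -hftc

open Finset Nat in
theorem pow_succ_mul_Mmat_succ (L : Matrix (Fin N) (Fin N) ℝ) (n : ℕ) (τ : ℝ) :
    L ^ (n + 1) * Mmat L (n + 1) τ
      = (n ! : ℝ) • (exp (τ • L) - ∑ k ∈ range (n + 1), (τ ^ k / k !) • L ^ k) := by
  induction n with
  | zero => simp [mul_Mmat_succ]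
  | succ n ih =>
    rw [pow_succ, mul_assoc, mul_Mmat_succ, mul_sub, mul_add, mul_smul_comm, ih,
      zero_pow n.succ_ne_zero, zero_smul, mul_zero, add_zero, mul_smul_comm, mul_one,
      sum_range_succ _ (n + 1), factorial_succ]
    match_scalars <;> field_simp

end Mmat

/-- for invertible `L` and `τ > 0`,
`2M₃/τ² − 3M₂/τ + M₁ = τ⁻² L⁻³ (−4I − τL + exp(τL)(4I − 3τL + τ²L²))`
(the coefficient of `f(u(t),t)` in the final step of ETD3RK and ETD4RK). -/
theorem etd_coeff_f_u_t (N : ℕ) (L : Matrix (Fin N) (Fin N) ℝ) (hL : IsUnit L)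
    (τ : ℝ) (hτ : 0 < τ) :
    (2 / τ ^ 2) • Mmat L 3 τ - (3 / τ) • Mmat L 2 τ + Mmat L 1 τ
      = (τ ^ 2)⁻¹ • (L⁻¹ ^ 3
        * (-(4 : ℝ) • (1 : Matrix (Fin N) (Fin N) ℝ) - τ • L
          + NormedSpace.exp (τ • L)
            * ((4 : ℝ) • (1 : Matrix (Fin N) (Fin N) ℝ) - (3 * τ) • L + τ ^ 2 • L ^ 2))) := by
  set E := exp (τ • L)
  have h1 : L * Mmat L 1 τ = E - 1 := by simpa using pow_succ_mul_Mmat_succ L 0 τ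
  have h2 : L ^ 2 * Mmat L 2 τ = E - 1 - τ • L := by
    simpa [Finset.sum_range_succ, sub_sub] using pow_succ_mul_Mmat_succ L 1 τ
  have h3 : L ^ 3 * Mmat L 3 τ = (2 : ℝ) • (E - 1 - τ • L - (τ ^ 2 / 2) • L ^ 2) := by
    simpa [Finset.sum_range_succ, sub_sub] using pow_succ_mul_Mmat_succ L 2 τ
  have hinv : L ^ 3 * L⁻¹ ^ 3 = 1 := by
    rw [Matrix.inv_pow', Matrix.mul_nonsing_inv _ ((L ^ 3).isUnit_iff_isUnit_det.1 (hL.pow 3))]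
  have hcomm : Commute L E := ((Commute.refl L).smul_right τ).exp_right
  refine (hL.pow 3).mul_left_cancel ?_
  calc L ^ 3 * ((2 / τ ^ 2) • Mmat L 3 τ - (3 / τ) • Mmat L 2 τ + Mmat L 1 τ)
      = (2 / τ ^ 2) • (L ^ 3 * Mmat L 3 τ) - (3 / τ) • (L * (L ^ 2 * Mmat L 2 τ))
          + L ^ 2 * (L * Mmat L 1 τ) := by
        simp only [mul_add, mul_sub, mul_smul_comm, ← mul_assoc, ← pow_succ, ← pow_succ']
    _ = _ := by
      rw [h1, h2, h3, mul_smul_comm, ← mul_assoc, hinv, one_mul]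
      simp only [mul_sub, mul_add, mul_one, mul_smul_comm, ← sq, hcomm.eq, (hcomm.pow_left 2).eq]
      match_scalars <;> field_simp <;> ring
end

section
/- Let L be an invertible N×N real matrix and τ > 0. Then 4M₂(τ)/τ − 4M₃(τ)/τ² = 4 τ⁻² L⁻³ · (2I + τL + exp(τL)·(τL − 2I)). This identifies the coefficient of the midpoint stage value in the final step of the ETD3RK and ETD4RK schemes of Cox and Matthews with its form in terms of the matrices M₂, M₃. -/
attribute [local instance] Matrix.normedAddCommGroup Matrix.normedSpace

/-!
Each moment `∫₀^τ tᵏ exp((τ-t)A) dt` has the antiderivative `-exp((τ-t)A) P(t)` for the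
polynomial `P` in `A⁻¹` with `A P - P' = tᵏ`; after that the identity is algebra in the commuting
elements `A⁻¹` and `exp(τA)`. The sup norm on matrices is not submultiplicative, so the calculus
is done in a Banach algebra and carried to matrices along the algebra isomorphism with the
operators on Euclidean space.
-/

open NormedSpace

section ExpMoment

variable {𝔸 : Type*} [NormedRing 𝔸] [NormedAlgebra ℝ 𝔸] [CompleteSpace 𝔸]

/-- `expMoment A (n - 1) τ` is the paper's `Mₙ(τ)`, see `map_expMoment`. -/
noncomputable def expMoment (A : 𝔸) (k : ℕ) (τ : ℝ) : 𝔸 :=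
  ∫ t in (0 : ℝ)..τ, t ^ k • exp ((τ - t) • A)

theorem hasDerivAt_exp_sub_smul (A : 𝔸) (τ t : ℝ) :
    HasDerivAt (fun s : ℝ => exp ((τ - s) • A)) (-(exp ((τ - t) • A) * A)) t := by
  simpa [Function.comp_def] using
    (hasDerivAt_exp_smul_const A (τ - t)).scomp t ((hasDerivAt_id t).const_sub τ)

theorem continuous_exp_sub_smul (A : 𝔸) (τ : ℝ) : Continuous fun t : ℝ => exp ((τ - t) • A) :=
  continuous_iff_continuousAt.2 fun t => (hasDerivAt_exp_sub_smul A τ t).continuousAt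

theorem integral_exp_sub_smul_mul_eq {A : 𝔸} {P P' : ℝ → 𝔸} (hP : ∀ t, HasDerivAt P (P' t) t)
    (hP' : Continuous P') (τ : ℝ) :
    ∫ t in (0 : ℝ)..τ, exp ((τ - t) • A) * (A * P t - P' t) = exp (τ • A) * P 0 - P τ := by
  have hF : ∀ t ∈ Set.uIcc 0 τ, HasDerivAt (fun s => -(exp ((τ - s) • A) * P s))
      (exp ((τ - t) • A) * (A * P t - P' t)) t := fun t _ => by
    refine ((hasDerivAt_exp_sub_smul A τ t).mul (hP t)).neg.congr_deriv ?_
    noncomm_ring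
  have hexp := continuous_exp_sub_smul A τ
  have hcont : Continuous P := continuous_iff_continuousAt.2 fun t => (hP t).continuousAt
  rw [intervalIntegral.integral_eq_sub_of_hasDerivAt hF
    ((by fun_prop : Continuous _).intervalIntegrable _ _)]
  simp only [sub_self, zero_smul, exp_zero, one_mul, sub_zero, sub_neg_eq_add]
  abel

theorem expMoment_one (u : 𝔸ˣ) (τ : ℝ) :
    expMoment (u : 𝔸) 1 τ = exp (τ • (u : 𝔸)) * ↑u⁻¹ ^ 2 - τ • (↑u⁻¹ : 𝔸) - ↑u⁻¹ ^ 2 := by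
  set B : 𝔸 := ↑u⁻¹
  have hP : ∀ t : ℝ, HasDerivAt (fun s : ℝ => s • B + B ^ 2) B t := fun t => by
    simpa using ((hasDerivAt_id t).smul_const B).add_const (B ^ 2)
  have hAP : ∀ t : ℝ, (u : 𝔸) * (t • B + B ^ 2) - B = t • 1 := fun t => by
    rw [mul_add, mul_smul_comm, Units.mul_inv, pow_two, ← mul_assoc, Units.mul_inv, one_mul,
      add_sub_cancel_right]
  have key := integral_exp_sub_smul_mul_eq (A := (u : 𝔸)) hP continuous_const τ
  simp only [hAP, mul_smul_comm, mul_one, zero_smul, zero_add] at key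
  simp only [expMoment, pow_one, key]
  abel

theorem expMoment_two (u : 𝔸ˣ) (τ : ℝ) :
    expMoment (u : 𝔸) 2 τ
      = (2 : ℝ) • (exp (τ • (u : 𝔸)) * ↑u⁻¹ ^ 3) - τ ^ 2 • (↑u⁻¹ : 𝔸)
        - (2 * τ) • (↑u⁻¹ : 𝔸) ^ 2 - (2 : ℝ) • (↑u⁻¹ : 𝔸) ^ 3 := by
  set B : 𝔸 := ↑u⁻¹
  have hP : ∀ t : ℝ, HasDerivAt (fun s : ℝ => s ^ 2 • B + (2 * s) • B ^ 2 + (2 : ℝ) • B ^ 3)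
      ((2 * t) • B + (2 : ℝ) • B ^ 2) t := fun t => by
    have h1 := (hasDerivAt_pow 2 t).smul_const B
    have h2 := ((hasDerivAt_id t).const_mul 2).smul_const (B ^ 2)
    simpa using (h1.add h2).add_const ((2 : ℝ) • B ^ 3)
  have hAP : ∀ t : ℝ, (u : 𝔸) * (t ^ 2 • B + (2 * t) • B ^ 2 + (2 : ℝ) • B ^ 3)
      - ((2 * t) • B + (2 : ℝ) • B ^ 2) = t ^ 2 • 1 := fun t => by
    have h2 : (u : 𝔸) * B ^ 2 = B := by rw [pow_two, ← mul_assoc, Units.mul_inv, one_mul]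
    have h3 : (u : 𝔸) * B ^ 3 = B ^ 2 := by rw [pow_succ', ← mul_assoc, Units.mul_inv, one_mul]
    rw [mul_add, mul_add, mul_smul_comm, mul_smul_comm, mul_smul_comm, Units.mul_inv, h2, h3]
    abel
  have key := integral_exp_sub_smul_mul_eq (A := (u : 𝔸)) hP (by fun_prop) τ
  simp only [hAP, mul_smul_comm, mul_one] at key
  rw [expMoment, key]
  simp only [ne_eq, OfNat.ofNat_ne_zero, not_false_eq_true, zero_pow, zero_smul, mul_zero,
    add_zero, zero_add, mul_smul_comm]
  abel

theorem smul_expMoment_one_sub_smul_expMoment_two (u : 𝔸ˣ) (τ : ℝ) :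
    (4 / τ) • expMoment (u : 𝔸) 1 τ - (4 / τ ^ 2) • expMoment (u : 𝔸) 2 τ
      = (4 * (τ ^ 2)⁻¹) • ((↑u⁻¹ : 𝔸) ^ 3
        * ((2 : ℝ) • 1 + τ • (u : 𝔸) + exp (τ • (u : 𝔸)) * (τ • (u : 𝔸) - (2 : ℝ) • 1))) := by
  rw [expMoment_one, expMoment_two]
  -- at `τ = 0` both sides vanish, as `4 / 0 = 0`
  rcases eq_or_ne τ 0 with rfl | hτ
  · simp
  set B : 𝔸 := ↑u⁻¹
  set E := exp (τ • (u : 𝔸))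
  have hBE : Commute (B ^ 3) E := ((u.commute_inv_coe.smul_right τ).exp_right).pow_left 3
  have hBu : B ^ 3 * u = B ^ 2 := by rw [pow_succ, mul_assoc, Units.inv_mul, mul_one]
  simp only [mul_add, mul_sub, mul_smul_comm, mul_one, ← mul_assoc, hBE.eq, hBu]
  rw [mul_assoc, hBu]
  match_scalars <;> field_simp <;> ring

end ExpMoment

theorem map_exp_of_continuous {𝔸 𝔹 F : Type*} [NormedRing 𝔸] [NormedAlgebra ℝ 𝔸]
    [CompleteSpace 𝔸] [Ring 𝔹] [Algebra ℝ 𝔹] [TopologicalSpace 𝔹] [IsTopologicalRing 𝔹]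
    [T2Space 𝔹] [FunLike F 𝔸 𝔹] [AlgHomClass F ℝ 𝔸 𝔹] (f : F) (hf : Continuous f) (x : 𝔸) :
    f (exp x) = exp (f x) := by
  have h := ((expSeries_summable' (𝕂 := ℝ) x).hasSum.map f hf).tsum_eq
  simp only [exp_eq_tsum ℝ, Function.comp_def, map_smul, map_pow] at h ⊢
  exact h.symm

theorem map_expMoment {N : ℕ} {𝔸 : Type*} [NormedRing 𝔸] [NormedAlgebra ℝ 𝔸] [CompleteSpace 𝔸]
    (f : 𝔸 →ₐ[ℝ] Matrix (Fin N) (Fin N) ℝ) (hf : Continuous f) (A : 𝔸) (n : ℕ) (τ : ℝ) :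
    f (expMoment A (n - 1) τ) = Mmat (f A) n τ := by
  have hint : IntervalIntegrable (fun t : ℝ => t ^ (n - 1) • exp ((τ - t) • A))
      MeasureTheory.volume 0 τ :=
    ((continuous_pow _).smul (continuous_exp_sub_smul A τ)).intervalIntegrable _ _
  refine ((⟨f.toLinearMap, hf⟩ : 𝔸 →L[ℝ] _).intervalIntegral_comp_comm hint).symm.trans
    (intervalIntegral.integral_congr fun t _ => ?_)
  change f _ = _
  rw [map_smul, map_exp_of_continuous f hf, map_smul]

theorem etd_coeff_midpoint_general (N : ℕ) (L : Matrix (Fin N) (Fin N) ℝ) (hL : IsUnit L)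
    (τ : ℝ) :
    (4 / τ) • Mmat L 2 τ - (4 / τ ^ 2) • Mmat L 3 τ
      = (4 * (τ ^ 2)⁻¹) • (L⁻¹ ^ 3
        * ((2 : ℝ) • (1 : Matrix (Fin N) (Fin N) ℝ) + τ • L
          + NormedSpace.exp (τ • L)
            * (τ • L - (2 : ℝ) • (1 : Matrix (Fin N) (Fin N) ℝ)))) := by
  set e := Matrix.toEuclideanCLM (n := Fin N) (𝕜 := ℝ)
  set Φ : _ →ₐ[ℝ] Matrix (Fin N) (Fin N) ℝ := e.symm.toAlgEquiv.toAlgHom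
  have hΦ : Continuous Φ := e.toAlgEquiv.toLinearEquiv.toContinuousLinearEquiv.symm.continuous
  obtain ⟨u, hu⟩ := hL.map e
  have hL : L = Φ u := by simp [Φ, hu]
  have hLinv : L⁻¹ = Φ ↑u⁻¹ :=
    Matrix.inv_eq_right_inv (by rw [hL, ← map_mul, Units.mul_inv, map_one])
  rw [hLinv, hL, ← map_expMoment Φ hΦ, ← map_expMoment Φ hΦ]
  simpa [map_exp_of_continuous Φ hΦ] using
    congrArg Φ (smul_expMoment_one_sub_smul_expMoment_two u τ)

/-- for invertible `L` and `τ > 0`,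
`4M₂/τ − 4M₃/τ² = 4 τ⁻² L⁻³ (2I + τL + exp(τL)(τL − 2I))`
(the coefficient of the midpoint stage value in the final step of ETD3RK/ETD4RK). -/
theorem etd_coeff_midpoint (N : ℕ) (L : Matrix (Fin N) (Fin N) ℝ) (hL : IsUnit L)
    (τ : ℝ) (hτ : 0 < τ) :
    (4 / τ) • Mmat L 2 τ - (4 / τ ^ 2) • Mmat L 3 τ
      = (4 * (τ ^ 2)⁻¹) • (L⁻¹ ^ 3
        * ((2 : ℝ) • (1 : Matrix (Fin N) (Fin N) ℝ) + τ • L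
          + NormedSpace.exp (τ • L)
            * (τ • L - (2 : ℝ) • (1 : Matrix (Fin N) (Fin N) ℝ)))) :=
  etd_coeff_midpoint_general N L hL τ
end

section
/- (Local error of the ETD2RK scheme.) Let λ ∈ ℝ, u₀ ∈ ℝ, and let f : ℝ → ℝ be three times continuously differentiable. Let u(τ) denote the exact solution at time τ of u' = λu + f(t), u(0) = u₀, and let u_sch(τ) = a(τ) + τ⁻¹ m₂(τ)(f(τ) − f(0)) with a(τ) = e^{λτ} u₀ + m₁(τ) f(0), m₁(τ) = ∫₀^τ e^{λ(τ−t)} dt, m₂(τ) = ∫₀^τ e^{λ(τ−t)} t dt denote the result of one ETD2RK step of size τ. Then lim_{τ → 0⁺} (u(τ) − u_sch(τ)) / τ³ = −f''(0)/12, i.e. the one-step error of ETD2RK is −τ³ f̈/12 to leading order. -/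
/-!
Substituting `t = τ s`, the one-step error equals `τ³ ∫₀¹ e^{λτ(1-s)} E_τ(s) ds`, where
`E_τ(s) = (f(τs) - f(0) - s (f(τ) - f(0))) / τ²` is the error of the linear interpolant of `f`
through `0` and `τ`, rescaled by `τ²`. Second-order Taylor expansion at `0` shows that
`E_τ(s) → f''(0) (s² - s) / 2` and that `E_τ` stays bounded for small `τ`, so dominated
convergence yields the limit `∫₀¹ f''(0) (s² - s) / 2 ds = -f''(0) / 12`.
-/

open Filter Set Asymptotics Topology intervalIntegral

noncomputable def scaledInterpolationError (f : ℝ → ℝ) (τ s : ℝ) : ℝ :=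
  (f (τ * s) - f 0 - s * (f τ - f 0)) / τ ^ 2

section
variable {f : ℝ → ℝ}

theorem ContDiff.isLittleO_taylor_two (hf : ContDiff ℝ 2 f) (x₀ : ℝ) :
    (fun x => f x - f x₀ - deriv f x₀ * (x - x₀) - deriv (deriv f) x₀ / 2 * (x - x₀) ^ 2)
      =o[𝓝 x₀] fun x => (x - x₀) ^ 2 := by
  refine (taylor_isLittleO_univ (n := 2) (by exact_mod_cast hf)).congr_left fun x => ?_
  simp only [taylorWithinEval_succ, taylor_within_zero_eval, iteratedDerivWithin_univ,
    iteratedDeriv_succ, iteratedDeriv_zero]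
  norm_num
  ring

theorem ContDiff.tendsto_sub_tangent_div_sq (hf : ContDiff ℝ 2 f) :
    Tendsto (fun h => (f h - f 0 - deriv f 0 * h) / h ^ 2) (𝓝[≠] 0)
      (𝓝 (deriv (deriv f) 0 / 2)) := by
  have hR := (hf.isLittleO_taylor_two 0).tendsto_div_nhds_zero
  simp only [sub_zero] at hR
  have := (hR.mono_left (nhdsWithin_le_nhds (s := {0}ᶜ))).add_const (deriv (deriv f) 0 / 2)
  rw [zero_add] at this
  refine this.congr' ?_
  filter_upwards [self_mem_nhdsWithin] with h (hh : h ≠ 0)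
  field_simp
  ring

theorem ContDiff.isBigO_sub_tangent (hf : ContDiff ℝ 2 f) :
    (fun h => f h - f 0 - deriv f 0 * h) =O[𝓝 0] fun h => h ^ 2 := by
  have hR := hf.isLittleO_taylor_two 0
  simp only [sub_zero] at hR
  exact (hR.isBigO.add (isBigO_const_mul_self (deriv (deriv f) 0 / 2) _ _)).congr_left
    fun h => by ring

theorem ContDiff.tendsto_scaledInterpolationError (hf : ContDiff ℝ 2 f) {s : ℝ} (hs : s ≠ 0) :
    Tendsto (fun τ => scaledInterpolationError f τ s) (𝓝[≠] 0)
      (𝓝 (deriv (deriv f) 0 / 2 * (s ^ 2 - s))) := by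
  have hmul : Tendsto (· * s) (𝓝[≠] 0) (𝓝[≠] 0) := by
    refine tendsto_nhdsWithin_iff.2
      ⟨?_, eventually_nhdsWithin_of_forall fun τ hτ => mul_ne_zero hτ hs⟩
    simpa using ((continuous_mul_const s).tendsto 0).mono_left nhdsWithin_le_nhds
  have hQ := hf.tendsto_sub_tangent_div_sq
  have := ((hQ.comp hmul).const_mul (s ^ 2)).sub (hQ.const_mul s)
  rw [show deriv (deriv f) 0 / 2 * (s ^ 2 - s)
    = s ^ 2 * (deriv (deriv f) 0 / 2) - s * (deriv (deriv f) 0 / 2) by ring]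
  refine this.congr' ?_
  filter_upwards [self_mem_nhdsWithin] with τ (hτ : τ ≠ 0)
  simp only [Function.comp_apply, scaledInterpolationError]
  field_simp
  ring

theorem ContDiff.exists_eventually_abs_scaledInterpolationError_le (hf : ContDiff ℝ 2 f) :
    ∃ B, ∀ᶠ τ in 𝓝 0, ∀ s ∈ Icc (0 : ℝ) 1, |scaledInterpolationError f τ s| ≤ B := by
  obtain ⟨C, hC, hCbound⟩ := hf.isBigO_sub_tangent.exists_pos
  obtain ⟨δ, hδ, hδbound⟩ := Metric.eventually_nhds_iff.1 hCbound.bound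
  have hquad : ∀ h, |h| < δ → |f h - f 0 - deriv f 0 * h| ≤ C * h ^ 2 := fun h hh => by
    simpa [abs_pow, sq_abs] using hδbound (by simpa using hh)
  refine ⟨2 * C, ?_⟩
  filter_upwards [Metric.ball_mem_nhds 0 hδ] with τ hτ s ⟨hs0, hs1⟩
  rw [Metric.mem_ball, Real.dist_eq, sub_zero] at hτ
  have hτs : |τ * s| < δ := by
    rw [abs_mul, abs_of_nonneg hs0]
    exact lt_of_le_of_lt (mul_le_of_le_one_right (abs_nonneg τ) hs1) hτ
  have hnum : |f (τ * s) - f 0 - s * (f τ - f 0)| ≤ 2 * C * τ ^ 2 :=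
    calc |f (τ * s) - f 0 - s * (f τ - f 0)|
        = |(f (τ * s) - f 0 - deriv f 0 * (τ * s)) - s * (f τ - f 0 - deriv f 0 * τ)| := by
          ring_nf
      _ ≤ C * (τ * s) ^ 2 + s * (C * τ ^ 2) := by
          refine (abs_sub _ _).trans (add_le_add (hquad _ hτs) ?_)
          rw [abs_mul, abs_of_nonneg hs0]
          exact mul_le_mul_of_nonneg_left (hquad τ hτ) hs0
      _ = C * τ ^ 2 * (s ^ 2 + s) := by ring
      _ ≤ C * τ ^ 2 * 2 := mul_le_mul_of_nonneg_left (by nlinarith) (by positivity)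
      _ = 2 * C * τ ^ 2 := by ring
  rw [scaledInterpolationError, abs_div, abs_of_nonneg (sq_nonneg τ)]
  exact div_le_of_le_mul₀ (sq_nonneg τ) (by positivity) hnum

theorem Real.exp_mul_le_exp_abs (lam : ℝ) {x : ℝ} (hx₀ : 0 ≤ x) (hx₁ : x ≤ 1) :
    Real.exp (lam * x) ≤ Real.exp |lam| :=
  Real.exp_le_exp.2 <| (mul_le_mul_of_nonneg_right (le_abs_self lam) hx₀).trans
    (mul_le_of_le_one_right (abs_nonneg lam) hx₁)

theorem integral_mul_sq_sub_self_zero_one (c : ℝ) :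
    ∫ s in (0 : ℝ)..1, c * (s ^ 2 - s) = -c / 6 := by
  rw [integral_const_mul, integral_sub ((continuous_pow 2).intervalIntegrable 0 1)
    ((continuous_id' (X := ℝ)).intervalIntegrable 0 1), integral_pow, integral_id]
  ring

theorem ContDiff.tendsto_integral_exp_mul_scaledInterpolationError (lam : ℝ)
    (hf : ContDiff ℝ 2 f) :
    Tendsto (fun τ => ∫ s in (0 : ℝ)..1,
        Real.exp (lam * (τ * (1 - s))) * scaledInterpolationError f τ s)
      (𝓝[>] 0) (𝓝 (-deriv (deriv f) 0 / 12)) := by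
  have hc := hf.continuous
  obtain ⟨B, hB⟩ := hf.exists_eventually_abs_scaledInterpolationError_le
  rw [show -deriv (deriv f) 0 / 12 = ∫ s in (0 : ℝ)..1, deriv (deriv f) 0 / 2 * (s ^ 2 - s) by
    rw [integral_mul_sq_sub_self_zero_one]; ring]
  refine tendsto_integral_filter_of_dominated_convergence (fun _ => Real.exp |lam| * B) ?_ ?_
    intervalIntegrable_const ?_
  · refine Eventually.of_forall fun τ => Continuous.aestronglyMeasurable ?_
    unfold scaledInterpolationError
    fun_prop
  · filter_upwards [nhdsWithin_le_nhds hB, Ioc_mem_nhdsGT (zero_lt_one' ℝ)] with τ hτB ⟨hτ0, hτ1⟩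
    refine Eventually.of_forall fun s hs => ?_
    rw [uIoc_of_le zero_le_one] at hs
    have hexp : Real.exp (lam * (τ * (1 - s))) ≤ Real.exp |lam| :=
      Real.exp_mul_le_exp_abs lam (by nlinarith [hs.2]) (by nlinarith [hs.1, hs.2])
    rw [norm_mul, Real.norm_of_nonneg (Real.exp_pos _).le]
    exact mul_le_mul hexp (hτB s (Ioc_subset_Icc_self hs)) (norm_nonneg _) (Real.exp_pos _).le
  · refine Eventually.of_forall fun s hs => ?_
    rw [uIoc_of_le zero_le_one] at hs
    have hexp : Tendsto (fun τ => Real.exp (lam * (τ * (1 - s)))) (𝓝[>] 0) (𝓝 1) := by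
      have hcont : Continuous fun τ => Real.exp (lam * (τ * (1 - s))) := by fun_prop
      simpa using (hcont.tendsto 0).mono_left nhdsWithin_le_nhds
    have hinterp := (hf.tendsto_scaledInterpolationError hs.1.ne')
      |>.mono_left (nhdsWithin_mono _ fun τ (hτ : 0 < τ) => hτ.ne')
    simpa using hexp.mul hinterp

theorem etd2rk_error_eq_cube_mul_integral (lam : ℝ) (hf : Continuous f) {τ : ℝ}
    (hτ : τ ≠ 0) :
    (∫ t in (0 : ℝ)..τ, Real.exp (lam * (τ - t)) * f t)
        - (∫ t in (0 : ℝ)..τ, Real.exp (lam * (τ - t))) * f 0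
        - τ⁻¹ * (∫ t in (0 : ℝ)..τ, Real.exp (lam * (τ - t)) * t) * (f τ - f 0)
      = τ ^ 3 * ∫ s in (0 : ℝ)..1,
          Real.exp (lam * (τ * (1 - s))) * scaledInterpolationError f τ s := by
  set g : ℝ → ℝ := fun t => Real.exp (lam * (τ - t)) * (f t - f 0 - τ⁻¹ * (f τ - f 0) * t)
  have hlin : (∫ t in (0 : ℝ)..τ, Real.exp (lam * (τ - t)) * f t)
        - (∫ t in (0 : ℝ)..τ, Real.exp (lam * (τ - t))) * f 0
        - τ⁻¹ * (∫ t in (0 : ℝ)..τ, Real.exp (lam * (τ - t)) * t) * (f τ - f 0)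
      = ∫ t in (0 : ℝ)..τ, g t := by
    have hg : ∀ t, g t = Real.exp (lam * (τ - t)) * f t - Real.exp (lam * (τ - t)) * f 0
        - τ⁻¹ * (f τ - f 0) * (Real.exp (lam * (τ - t)) * t) := fun t => by ring
    have hii : ∀ h : ℝ → ℝ, Continuous h → IntervalIntegrable h MeasureTheory.volume 0 τ :=
      fun h hh => hh.intervalIntegrable 0 τ
    rw [integral_congr fun t _ => hg t, integral_sub (hii _ (by fun_prop)) (hii _ (by fun_prop)),
      integral_sub (hii _ (by fun_prop)) (hii _ (by fun_prop)), integral_mul_const,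
      integral_const_mul]
    ring
  have hscale : ∫ t in (0 : ℝ)..τ, g t = τ * ∫ s in (0 : ℝ)..1, g (τ * s) := by
    rw [mul_integral_comp_mul_left, mul_zero, mul_one]
  have hpoint : ∀ s, g (τ * s)
      = τ ^ 2 * (Real.exp (lam * (τ * (1 - s))) * scaledInterpolationError f τ s) := fun s => by
    simp only [g, scaledInterpolationError]
    field_simp
  rw [hlin, hscale, integral_congr fun s _ => hpoint s, integral_const_mul]
  ring

end

/-- local error of the ETD2RK scheme: for the scalar problem
`u' = λu + f(t)`, `u(0) = u₀`, with `f` three times continuously differentiable,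
the exact solution `u(τ) = e^{λτ}u₀ + ∫₀^τ e^{λ(τ−t)} f(t) dt` and the result
`u_sch(τ) = e^{λτ}u₀ + m₁(τ)f(0) + τ⁻¹ m₂(τ)(f(τ) − f(0))` of one ETD2RK step,
where `m₁(τ) = ∫₀^τ e^{λ(τ−t)} dt` and `m₂(τ) = ∫₀^τ e^{λ(τ−t)} t dt`, satisfy
`lim_{τ→0⁺} (u(τ) − u_sch(τ))/τ³ = −f''(0)/12`. -/
theorem etd2rk_local_error (lam u₀ : ℝ) (f : ℝ → ℝ) (hf : ContDiff ℝ 3 f) :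
    Filter.Tendsto
      (fun τ : ℝ =>
        ((Real.exp (lam * τ) * u₀ + ∫ t in (0:ℝ)..τ, Real.exp (lam * (τ - t)) * f t)
          - ((Real.exp (lam * τ) * u₀ + (∫ t in (0:ℝ)..τ, Real.exp (lam * (τ - t))) * f 0)
            + τ⁻¹ * (∫ t in (0:ℝ)..τ, Real.exp (lam * (τ - t)) * t) * (f τ - f 0)))
          / τ ^ 3)
      (nhdsWithin 0 (Set.Ioi 0)) (nhds (-(deriv (deriv f) 0) / 12)) := by
  refine (ContDiff.tendsto_integral_exp_mul_scaledInterpolationError lam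
    (hf.of_le (by norm_num))).congr' ?_
  filter_upwards [self_mem_nhdsWithin] with τ (hτ : 0 < τ)
  rw [eq_div_iff (by positivity), mul_comm,
    ← etd2rk_error_eq_cube_mul_integral lam hf.continuous hτ.ne']
  ring
end
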